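/- Soundness of the negative-product rule: let v₁,…,v_k be nonzero integers with ∏ᵢ vᵢ < 0 and ∏ᵢ vᵢ ≤ c. If integers x₁,…,x_k satisfy sign(vᵢ)·xᵢ ≥ |vᵢ| for every i, then ∏ᵢ xᵢ ≤ c. -/
import Mathlib

theorem neg_prod_rule (k : ℕ) (hk : 1 ≤ k) (v x : Fin k → ℤ) (c : ℤ)
    (hv : ∀ i, v i ≠ 0) (hneg : (∏ i, v i) < 0) (hc : (∏ i, v i) ≤ c)
    (hx : ∀ i, Int.sign (v i) * x i ≥ |v i|) :
    (∏ i, x i) ≤ c := by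
  set y : Fin k → ℤ := fun i => Int.sign (v i) * x i with hy
  have hsgn : ∀ i, Int.sign (v i) = 1 ∨ Int.sign (v i) = -1 := by
    intro i; rcases lt_trichotomy (v i) 0 with h | h | h
    · right; exact Int.sign_eq_neg_one_of_neg h
    · exact absurd h (hv i)
    · left; exact Int.sign_eq_one_of_pos h
  have hsq : ∀ i, Int.sign (v i) * Int.sign (v i) = 1 := by
    intro i; rcases hsgn i with h | h <;> simp [h]
  have hxy : ∀ i, x i = Int.sign (v i) * y i := by
    intro i; simp [hy, ← mul_assoc, hsq i]
  have habs : ∀ i, v i = Int.sign (v i) * |v i| := by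
    intro i; exact (Int.sign_mul_abs _).symm
  have hprodx : (∏ i, x i) = (∏ i, Int.sign (v i)) * ∏ i, y i := by
    rw [← Finset.prod_mul_distrib]; exact Finset.prod_congr rfl fun i _ => hxy i
  have hprodv : (∏ i, v i) = (∏ i, Int.sign (v i)) * ∏ i, |v i| := by
    rw [← Finset.prod_mul_distrib]; exact Finset.prod_congr rfl fun i _ => habs i
  have habs_pos : (0:ℤ) < ∏ i, |v i| :=
    Finset.prod_pos fun i _ => abs_pos.mpr (hv i)
  have hsign_neg : (∏ i, Int.sign (v i)) = -1 := by
    have hne : (∏ i, Int.sign (v i)) < 0 := by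
      by_contra h
      push_neg at h
      have : (0:ℤ) ≤ ∏ i, v i := hprodv ▸ mul_nonneg h habs_pos.le
      omega
    have h1 : (∏ i, Int.sign (v i)) = 1 ∨ (∏ i, Int.sign (v i)) = -1 := by
      induction (Finset.univ : Finset (Fin k)) using Finset.induction with
      | empty => simp
      | @insert a s hni ih =>
        rw [Finset.prod_insert hni]
        rcases ih with h | h <;> rcases hsgn a with h' | h' <;> simp [h, h']
    omega
  have hy_le : (∏ i, |v i|) ≤ ∏ i, y i :=
    Finset.prod_le_prod (fun i _ => abs_nonneg _) (fun i _ => hx i)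
  calc (∏ i, x i) = -(∏ i, y i) := by rw [hprodx, hsign_neg]; ring
    _ ≤ -(∏ i, |v i|) := by omega
    _ = ∏ i, v i := by rw [hprodv, hsign_neg]; ring
    _ ≤ c := hc
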